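/- arXiv:2404.00243 — 4 statements merged into one kernel-verified Lean document; each statement's English description precedes it below -/
import Mathlib

section
/- Let N ≥ 2 and d ≥ N - 1 be natural numbers. Over all families (w₁, …, w_N) of N unit vectors in ℝ^d, the minimum of max_{i ≠ j} ⟨wᵢ, wⱼ⟩ equals -1/(N-1); that is, for every family of N unit vectors max_{i ≠ j} ⟨wᵢ, wⱼ⟩ ≥ -1/(N-1), and there exists a family of N unit vectors in ℝ^d attaining equality. -/
open RealInnerProductSpace

lemma tammes_lb (N d : ℕ) (hN : 2 ≤ N) (w : Fin N → EuclideanSpace ℝ (Fin d))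
    (hw : ∀ i, ‖w i‖ = 1) :
    ∃ i j : Fin N, i ≠ j ∧ -1 / ((N : ℝ) - 1) ≤ ⟪w i, w j⟫ := by
  by_contra h
  push_neg at h
  have hN1 : (1:ℝ) ≤ (N:ℝ) - 1 := by
    have : (2:ℝ) ≤ (N:ℝ) := by exact_mod_cast hN
    linarith
  have h0 : (0:ℝ) ≤ ⟪∑ i, w i, ∑ i, w i⟫ := real_inner_self_nonneg
  have hexp : ⟪∑ i, w i, ∑ i, w i⟫ = ∑ i : Fin N, ∑ j : Fin N, ⟪w i, w j⟫ := by
    rw [sum_inner]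
    exact Finset.sum_congr rfl fun i _ => inner_sum _ _ _
  have hlt : ∑ i : Fin N, ∑ j : Fin N, ⟪w i, w j⟫ < 0 := by
    have key : ∀ i : Fin N, ∑ j : Fin N, ⟪w i, w j⟫ < 0 := by
      intro i
      have hsplit : ∑ j : Fin N, ⟪w i, w j⟫
          = ⟪w i, w i⟫ + ∑ j ∈ Finset.univ.erase i, ⟪w i, w j⟫ :=
        (Finset.add_sum_erase _ _ (Finset.mem_univ i)).symm
      have hii : ⟪w i, w i⟫ = 1 := by
        rw [real_inner_self_eq_norm_mul_norm, hw i]; ring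
      have hcard : ((Finset.univ.erase i).card : ℝ) = (N:ℝ) - 1 := by
        rw [Finset.card_erase_of_mem (Finset.mem_univ i)]
        simp only [Finset.card_univ, Fintype.card_fin]
        have : 1 ≤ N := by omega
        push_cast [Nat.cast_sub this]
        ring
      have hne : (Finset.univ.erase i).Nonempty := by
        rw [← Finset.card_pos]
        have : (Finset.univ.erase i).card = N - 1 := by
          rw [Finset.card_erase_of_mem (Finset.mem_univ i)]; simp
        omega
      have hsum : ∑ j ∈ Finset.univ.erase i, ⟪w i, w j⟫
          < ∑ _j ∈ Finset.univ.erase i, (-1 / ((N:ℝ) - 1)) := by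
        refine Finset.sum_lt_sum_of_nonempty hne fun j hj => ?_
        exact h i j (Finset.ne_of_mem_erase hj).symm
      rw [Finset.sum_const, nsmul_eq_mul, hcard] at hsum
      have : ((N:ℝ) - 1) * (-1 / ((N:ℝ) - 1)) = -1 := by
        field_simp
      rw [this] at hsum
      rw [hsplit, hii]; linarith
    calc ∑ i : Fin N, ∑ j : Fin N, ⟪w i, w j⟫ < ∑ _i : Fin N, (0:ℝ) := by
          refine Finset.sum_lt_sum_of_nonempty ?_ fun i _ => key i
          exact ⟨⟨0, by omega⟩, Finset.mem_univ _⟩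
      _ = 0 := by simp
  rw [hexp] at h0
  linarith

lemma tammes_construct (N d : ℕ) (hN : 2 ≤ N) (hd : N - 1 ≤ d) :
    ∃ w : Fin N → EuclideanSpace ℝ (Fin d), (∀ i, ‖w i‖ = 1) ∧
      ∀ i j : Fin N, i ≠ j → ⟪w i, w j⟫ = -1 / ((N : ℝ) - 1) := by
  have hNpos : (0:ℝ) < N := by positivity
  have hN1 : (0:ℝ) < (N:ℝ) - 1 := by
    have : (2:ℝ) ≤ (N:ℝ) := by exact_mod_cast hN
    linarith
  -- the hyperplane of sum zero in ℝ^N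
  set H : Submodule ℝ (EuclideanSpace ℝ (Fin N)) :=
    { carrier := {x | ∑ k, x k = 0}
      add_mem' := by
        intro a b ha hb
        simp only [Set.mem_setOf_eq] at *
        simp [PiLp.add_apply, Finset.sum_add_distrib, ha, hb]
      zero_mem' := by simp [Set.mem_setOf_eq]
      smul_mem' := by
        intro r a ha
        simp only [Set.mem_setOf_eq] at *
        simp [PiLp.smul_apply, ← Finset.mul_sum, ha] } with hH
  have memH : ∀ x : EuclideanSpace ℝ (Fin N), x ∈ H ↔ ∑ k, x k = 0 := fun x => Iff.rfl
  -- dimension bound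
  have hHne : H ≠ ⊤ := by
    intro htop
    have h1 : ((WithLp.equiv 2 (Fin N → ℝ)).symm (fun _ => (1:ℝ))) ∈ H := htop ▸ Submodule.mem_top
    rw [memH] at h1
    simp at h1
    omega
  have hmd : Module.finrank ℝ H ≤ d := by
    have := Submodule.finrank_lt hHne
    rw [finrank_euclideanSpace_fin] at this
    omega
  set m := Module.finrank ℝ H with hm
  -- orthonormal basis of H and orthonormal family in ℝ^d
  set b := stdOrthonormalBasis ℝ H with hb
  set u : Fin m → EuclideanSpace ℝ (Fin d) :=
    fun k => EuclideanSpace.single (Fin.castLE hmd k) 1 with hu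
  have hu_on : Orthonormal ℝ u := by
    have h1 : Orthonormal ℝ (EuclideanSpace.basisFun (Fin d) ℝ) :=
      (EuclideanSpace.basisFun (Fin d) ℝ).orthonormal
    have := h1.comp (Fin.castLE hmd) (Fin.castLE_injective hmd)
    convert this using 1
    funext k
    simp [hu, Function.comp]
  -- the simplex vectors in ℝ^N
  set c : EuclideanSpace ℝ (Fin N) := (WithLp.equiv 2 (Fin N → ℝ)).symm (fun _ => ((N:ℝ))⁻¹) with hc
  set s : ℝ := Real.sqrt ((N:ℝ)/((N:ℝ)-1)) with hs
  have hs2 : s * s = (N:ℝ)/((N:ℝ)-1) := by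
    rw [hs]; exact Real.mul_self_sqrt (le_of_lt (by positivity))
  set v : Fin N → EuclideanSpace ℝ (Fin N) :=
    fun i => s • (EuclideanSpace.single i 1 - c) with hv
  have hck : ∀ k : Fin N, c k = ((N:ℝ))⁻¹ := fun k => rfl
  have hbase : ∀ i j : Fin N, ⟪EuclideanSpace.single i (1:ℝ) - c, EuclideanSpace.single j (1:ℝ) - c⟫
      = (if i = j then (1:ℝ) else 0) - ((N:ℝ))⁻¹ := by
    intro i j
    have hcc : ⟪c, c⟫ = ((N:ℝ))⁻¹ := by
      rw [PiLp.inner_apply]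
      simp only [RCLike.inner_apply, conj_trivial, hck]
      rw [Finset.sum_const, Finset.card_univ, Fintype.card_fin, nsmul_eq_mul]
      field_simp
    have hsc : ∀ j : Fin N, ⟪c, EuclideanSpace.single j (1:ℝ)⟫ = ((N:ℝ))⁻¹ := by
      intro j
      rw [EuclideanSpace.inner_single_right]
      simp [hck]
    have hcs : ∀ i : Fin N, ⟪EuclideanSpace.single i (1:ℝ), c⟫ = ((N:ℝ))⁻¹ := by
      intro i
      rw [EuclideanSpace.inner_single_left]
      simp [hck]
    have hss : ⟪EuclideanSpace.single i (1:ℝ), EuclideanSpace.single j (1:ℝ)⟫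
        = (if i = j then (1:ℝ) else 0) := by
      rw [EuclideanSpace.inner_single_left]
      simp [EuclideanSpace.single_apply, eq_comm]
    rw [inner_sub_left, inner_sub_right, inner_sub_right, hss, hcs, hsc, hcc]
    ring
  have hvinner : ∀ i j : Fin N, ⟪v i, v j⟫
      = ((N:ℝ)/((N:ℝ)-1)) * ((if i = j then (1:ℝ) else 0) - ((N:ℝ))⁻¹) := by
    intro i j
    rw [hv]
    simp only [real_inner_smul_left, real_inner_smul_right]
    rw [hbase, ← mul_assoc, hs2]
  have hvmem : ∀ i : Fin N, v i ∈ H := by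
    intro i
    rw [memH]
    have : ∀ k : Fin N, (v i) k = s * ((if k = i then (1:ℝ) else 0) - ((N:ℝ))⁻¹) := by
      intro k
      rw [hv]
      simp only [PiLp.smul_apply, PiLp.sub_apply, smul_eq_mul, EuclideanSpace.single_apply, hck]
    simp only [this]
    rw [← Finset.mul_sum, Finset.sum_sub_distrib]
    rw [Finset.sum_ite_eq' Finset.univ i (fun _ => (1:ℝ))]
    simp only [Finset.mem_univ, if_true, Finset.sum_const, Finset.card_univ, Fintype.card_fin,
      nsmul_eq_mul]
    have : (N:ℝ) * ((N:ℝ))⁻¹ = 1 := by field_simp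
    rw [this]
    ring
  set w : Fin N → EuclideanSpace ℝ (Fin d) :=
    fun i => ∑ k : Fin m, b.repr ⟨v i, hvmem i⟩ k • u k with hw
  have hwinner : ∀ i j : Fin N, ⟪w i, w j⟫ = ⟪v i, v j⟫ := by
    intro i j
    rw [hw]
    rw [hu_on.inner_sum]
    simp only [conj_trivial]
    have : ∑ k : Fin m, b.repr ⟨v i, hvmem i⟩ k * b.repr ⟨v j, hvmem j⟩ k
        = ⟪b.repr ⟨v i, hvmem i⟩, b.repr ⟨v j, hvmem j⟩⟫ := by
      rw [PiLp.inner_apply]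
      simp [RCLike.inner_apply, conj_trivial]
      exact Finset.sum_congr rfl fun _ _ => mul_comm _ _
    rw [this, b.repr.inner_map_map]
    rfl
  have hdiag : ∀ i : Fin N, ⟪w i, w i⟫ = 1 := by
    intro i
    rw [hwinner, hvinner]
    simp only [if_pos rfl]
    field_simp
    simp
  have hoff : ∀ i j : Fin N, i ≠ j → ⟪w i, w j⟫ = -1 / ((N:ℝ) - 1) := by
    intro i j hij
    rw [hwinner, hvinner, if_neg hij]
    field_simp
    ring
  refine ⟨w, fun i => ?_, hoff⟩
  rw [norm_eq_sqrt_real_inner, hdiag, Real.sqrt_one]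

/-- Over all families of `N` unit vectors in `ℝ^d` (with `N ≥ 2`, `d ≥ N-1`), the minimum of
the maximal pairwise inner product equals `-1/(N-1)`: every family satisfies the lower bound,
and some family attains it. -/
theorem tammes_min_max_pairwise_inner (N d : ℕ) (hN : 2 ≤ N) (hd : N - 1 ≤ d) :
    (∀ w : Fin N → EuclideanSpace ℝ (Fin d), (∀ i, ‖w i‖ = 1) →
      -1 / ((N : ℝ) - 1) ≤ sSup {x : ℝ | ∃ i j : Fin N, i ≠ j ∧ x = ⟪w i, w j⟫}) ∧
    (∃ w : Fin N → EuclideanSpace ℝ (Fin d), (∀ i, ‖w i‖ = 1) ∧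
      sSup {x : ℝ | ∃ i j : Fin N, i ≠ j ∧ x = ⟪w i, w j⟫} = -1 / ((N : ℝ) - 1)) := by
  constructor
  · intro w hw
    obtain ⟨i, j, hij, hle⟩ := tammes_lb N d hN w hw
    have hmem : ⟪w i, w j⟫ ∈ {x : ℝ | ∃ i j : Fin N, i ≠ j ∧ x = ⟪w i, w j⟫} :=
      ⟨i, j, hij, rfl⟩
    have hbdd : BddAbove {x : ℝ | ∃ i j : Fin N, i ≠ j ∧ x = ⟪w i, w j⟫} := by
      refine Set.Finite.bddAbove (Set.Finite.subset
        (Set.finite_range (fun p : Fin N × Fin N => ⟪w p.1, w p.2⟫)) ?_)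
      rintro x ⟨i, j, hij, rfl⟩
      exact ⟨(i, j), rfl⟩
    exact hle.trans (le_csSup hbdd hmem)
  · obtain ⟨w, hw, hoff⟩ := tammes_construct N d hN hd
    refine ⟨w, hw, ?_⟩
    have hset : {x : ℝ | ∃ i j : Fin N, i ≠ j ∧ x = ⟪w i, w j⟫} = {-1 / ((N : ℝ) - 1)} := by
      ext x
      constructor
      · rintro ⟨i, j, hij, rfl⟩
        simp [hoff i j hij]
      · rintro rfl
        refine ⟨⟨0, by omega⟩, ⟨1, by omega⟩, ?_, ?_⟩
        · intro h
          have := congrArg Fin.val h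
          simp at this
        · rw [hoff _ _ (by intro h; have := congrArg Fin.val h; simp at this)]
    rw [hset, csSup_singleton]
end

section
/- Let N ≥ 2 and let w₁, …, w_N be unit vectors in a real inner product space such that max_{i ≠ j} ⟨wᵢ, wⱼ⟩ = -1/(N-1). Then ⟨wᵢ, wⱼ⟩ = -1/(N-1) for all i ≠ j, and Σ_{i=1}^N wᵢ = 0. -/
open RealInnerProductSpace

/-- If `N ≥ 2` unit vectors in a real inner product space satisfy
`max_{i ≠ j} ⟪wᵢ, wⱼ⟫ = -1/(N-1)`, then all pairwise inner products equal `-1/(N-1)`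
and the vectors sum to zero. -/
theorem eq_of_max_pairwise_inner_eq_min
    {E : Type*} [NormedAddCommGroup E] [InnerProductSpace ℝ E]
    (N : ℕ) (hN : 2 ≤ N) (w : Fin N → E) (hw : ∀ i, ‖w i‖ = 1)
    (hmax : sSup {x : ℝ | ∃ i j : Fin N, i ≠ j ∧ x = ⟪w i, w j⟫} = -1 / ((N : ℝ) - 1)) :
    (∀ i j : Fin N, i ≠ j → ⟪w i, w j⟫ = -1 / ((N : ℝ) - 1)) ∧ ∑ i, w i = 0 := by
  have hN1 : (1:ℝ) ≤ (N:ℝ) - 1 := by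
    have : (2:ℝ) ≤ (N:ℝ) := by exact_mod_cast hN
    linarith
  set c : ℝ := -1 / ((N : ℝ) - 1) with hc
  have hSfin : {x : ℝ | ∃ i j : Fin N, i ≠ j ∧ x = ⟪w i, w j⟫}.Finite := by
    have hsub : {x : ℝ | ∃ i j : Fin N, i ≠ j ∧ x = ⟪w i, w j⟫} ⊆
        (fun p : Fin N × Fin N => ⟪w p.1, w p.2⟫) '' Set.univ := by
      rintro x ⟨i, j, _, rfl⟩; exact ⟨(i, j), trivial, rfl⟩
    exact Set.Finite.subset (Set.finite_univ.image _) hsub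
  have hle : ∀ i j : Fin N, i ≠ j → ⟪w i, w j⟫ ≤ c := by
    intro i j hij
    rw [← hmax]
    exact le_csSup hSfin.bddAbove ⟨i, j, hij, rfl⟩
  have hcN : ((N:ℝ) - 1) * c = -1 := by
    rw [hc]; field_simp
  have hE : ∀ i : Fin N, ∑ j ∈ Finset.univ.erase i, ⟪w i, w j⟫ ≤ -1 := by
    intro i
    calc ∑ j ∈ Finset.univ.erase i, ⟪w i, w j⟫
        ≤ ∑ _j ∈ Finset.univ.erase i, c :=
          Finset.sum_le_sum fun j hj => hle i j (Ne.symm (Finset.ne_of_mem_erase hj))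
      _ = ((N:ℝ) - 1) * c := by
          rw [Finset.sum_const, Finset.card_erase_of_mem (Finset.mem_univ i),
            Finset.card_univ, Fintype.card_fin, nsmul_eq_mul]
          congr 1
          push_cast [Nat.cast_sub (by omega : 1 ≤ N)]
          ring
      _ = -1 := hcN
  have hsplit : ∀ i : Fin N, ∑ j, ⟪w i, w j⟫ = 1 + ∑ j ∈ Finset.univ.erase i, ⟪w i, w j⟫ := by
    intro i
    rw [← Finset.add_sum_erase _ _ (Finset.mem_univ i), real_inner_self_eq_norm_sq, hw i]
    norm_num
  have hT : ⟪∑ i, w i, ∑ i, w i⟫ = ∑ i, ∑ j, ⟪w i, w j⟫ := by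
    simp only [sum_inner, inner_sum]
    exact Finset.sum_comm
  have hT0 : (0:ℝ) ≤ ∑ i, ∑ j, ⟪w i, w j⟫ := hT ▸ real_inner_self_nonneg
  have hTle : ∑ i, ∑ j, ⟪w i, w j⟫ ≤ 0 := by
    calc ∑ i, ∑ j, ⟪w i, w j⟫
        = ∑ i, (1 + ∑ j ∈ Finset.univ.erase i, ⟪w i, w j⟫) := by
          exact Finset.sum_congr rfl fun i _ => hsplit i
      _ ≤ ∑ _i : Fin N, (0:ℝ) := Finset.sum_le_sum fun i _ => by linarith [hE i]
      _ = 0 := by simp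
  have hTzero : ∑ i, ∑ j, ⟪w i, w j⟫ = 0 := le_antisymm hTle hT0
  have hsum : ∑ i, w i = 0 := by
    have : ⟪∑ i, w i, ∑ i, w i⟫ = 0 := by rw [hT, hTzero]
    exact inner_self_eq_zero.mp this
  refine ⟨?_, hsum⟩
  intro i j hij
  by_contra h
  have hlt : ⟪w i, w j⟫ < c := lt_of_le_of_ne (hle i j hij) h
  have hEi : ∑ k ∈ Finset.univ.erase i, ⟪w i, w k⟫ < -1 := by
    have hjmem : j ∈ Finset.univ.erase i := Finset.mem_erase.mpr ⟨Ne.symm hij, Finset.mem_univ j⟩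
    calc ∑ k ∈ Finset.univ.erase i, ⟪w i, w k⟫
        < ∑ _k ∈ Finset.univ.erase i, c := by
          refine Finset.sum_lt_sum (fun k hk => hle i k (Ne.symm (Finset.ne_of_mem_erase hk)))
            ⟨j, hjmem, hlt⟩
      _ = ((N:ℝ) - 1) * c := by
          rw [Finset.sum_const, Finset.card_erase_of_mem (Finset.mem_univ i),
            Finset.card_univ, Fintype.card_fin, nsmul_eq_mul]
          congr 1
          push_cast [Nat.cast_sub (by omega : 1 ≤ N)]
          ring
      _ = -1 := hcN
  have hTlt : ∑ i, ∑ j, ⟪w i, w j⟫ < 0 := by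
    calc ∑ i', ∑ j', ⟪w i', w j'⟫
        = ∑ i', (1 + ∑ j' ∈ Finset.univ.erase i', ⟪w i', w j'⟫) :=
          Finset.sum_congr rfl fun i' _ => hsplit i'
      _ < ∑ _i : Fin N, (0:ℝ) := by
          refine Finset.sum_lt_sum (fun k _ => by linarith [hE k]) ⟨i, Finset.mem_univ i, ?_⟩
          linarith
      _ = 0 := by simp
  linarith
end

section
/- Let d ≥ 2, let v ∈ ℝ^d be a unit vector, let c ∈ ℝ^d be a fixed vector, and let w ∈ ℝ^d be such that w + c is nonzero and not a scalar multiple of v. Then the function f(x) = θ⟨x + c, v⟩, the undirected angle between x + c and v, is differentiable at w and the norm of its gradient at w equals 1 / ‖w + c‖. -/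
set_option maxHeartbeats 1000000


open RealInnerProductSpace

/-- Gradient norm of the angle-to-`v` map: for a unit vector `v`, a fixed `c`, and `w` with
`w + c` nonzero and not a scalar multiple of `v`, the map `x ↦ θ⟨x + c, v⟩` is differentiable
at `w` with gradient of norm `1 / ‖w + c‖`. -/
theorem gradient_norm_angle (d : ℕ) (hd : 2 ≤ d)
    (v c w : EuclideanSpace ℝ (Fin d)) (hv : ‖v‖ = 1) (hwc : w + c ≠ 0)
    (hwv : ¬ ∃ r : ℝ, w + c = r • v) :
    DifferentiableAt ℝ (fun x : EuclideanSpace ℝ (Fin d) =>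
        InnerProductGeometry.angle (x + c) v) w ∧
    ‖gradient (fun x : EuclideanSpace ℝ (Fin d) =>
        InnerProductGeometry.angle (x + c) v) w‖ = 1 / ‖w + c‖ := by
  have hE : True := trivial
  set u : EuclideanSpace ℝ (Fin d) := w + c with hu
  set n : ℝ := ‖u‖ with hn_def
  set s : ℝ := ⟪u, v⟫ with hs_def
  have hn2 : 0 < n := norm_pos_iff.mpr hwc
  have hn : n ≠ 0 := hn2.ne'
  -- strict Cauchy–Schwarz
  have hs1 : s < n := by
    have := inner_lt_norm_mul_iff_real (x := u) (y := v)
    rw [hv, mul_one, one_smul] at this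
    exact this.mpr (fun h => hwv ⟨n, h⟩)
  have hs2 : -s < n := by
    have := inner_lt_norm_mul_iff_real (x := u) (y := -v)
    rw [norm_neg, hv, mul_one, one_smul, inner_neg_right] at this
    refine this.mpr (fun h => hwv ⟨-n, ?_⟩)
    rw [hu] at h ⊢
    rw [h, smul_neg, neg_smul]
  have ht : |s * n⁻¹| < 1 := by
    rw [abs_mul, abs_inv, abs_of_pos hn2, ← div_eq_mul_inv, div_lt_one hn2]
    exact abs_lt.mpr ⟨by linarith, hs1⟩
  have ht' := abs_lt.mp ht
  have h₁ : s * n⁻¹ ≠ -1 := ne_of_gt ht'.1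
  have h₂ : s * n⁻¹ ≠ 1 := ne_of_lt ht'.2
  have hpos : 0 < 1 - (s * n⁻¹) ^ 2 := by nlinarith [ht'.1, ht'.2]
  have hsq : Real.sqrt (1 - (s * n⁻¹) ^ 2) > 0 := Real.sqrt_pos.mpr hpos
  -- derivative of norm
  have hnormsq : HasFDerivAt (fun x : EuclideanSpace ℝ (Fin d) => ‖x‖ ^ 2) ((2:ℕ) • innerSL ℝ u) u :=
    (hasStrictFDerivAt_norm_sq u).hasFDerivAt
  have hnorm : HasFDerivAt (fun x : EuclideanSpace ℝ (Fin d) => ‖x‖)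
      ((1 / (2 * n)) • ((2:ℕ) • innerSL ℝ u)) u := by
    have h2 := (Real.hasDerivAt_sqrt (show ‖u‖ ^ 2 ≠ 0 by positivity)).comp_hasFDerivAt u hnormsq
    have hfun : (fun x : EuclideanSpace ℝ (Fin d) => Real.sqrt (‖x‖ ^ 2)) = fun x : EuclideanSpace ℝ (Fin d) => ‖x‖ :=
      funext fun x => Real.sqrt_sq (norm_nonneg x)
    rw [Real.sqrt_sq (norm_nonneg u)] at h2
    exact h2.congr_of_eventuallyEq (Filter.Eventually.of_forall fun x =>
      (Real.sqrt_sq (norm_nonneg x)).symm)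
  -- derivative of inverse norm
  have hinv : HasFDerivAt (fun x : EuclideanSpace ℝ (Fin d) => (‖x‖)⁻¹)
      ((-(n ^ 2)⁻¹) • ((1 / (2 * n)) • ((2:ℕ) • innerSL ℝ u))) u :=
    (hasDerivAt_inv hn).comp_hasFDerivAt u hnorm
  -- derivative of inner product with v
  have hinner : HasFDerivAt (fun x : EuclideanSpace ℝ (Fin d) => ⟪x, v⟫) (innerSL ℝ v : EuclideanSpace ℝ (Fin d) →L[ℝ] ℝ) u := by
    have hfun : (fun x : EuclideanSpace ℝ (Fin d) => ⟪x, v⟫) = fun x : EuclideanSpace ℝ (Fin d) => (innerSL ℝ v) x :=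
      funext fun x => by simp only [innerSL_apply_apply]; exact real_inner_comm v x
    rw [hfun]
    exact (innerSL ℝ v).hasFDerivAt
  have hmul := hinner.mul hinv
  have harccos := (Real.hasDerivAt_arccos h₁ h₂).comp_hasFDerivAt u hmul
  have htrans : HasFDerivAt (fun x : EuclideanSpace ℝ (Fin d) => x + c) (ContinuousLinearMap.id ℝ (EuclideanSpace ℝ (Fin d))) w :=
    (hasFDerivAt_id w).add_const c
  have hF := harccos.comp w htrans
  set G : EuclideanSpace ℝ (Fin d) := (-(1 / Real.sqrt (1 - (s * n⁻¹) ^ 2))) •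
      (n⁻¹ • v - (s * (n ^ 2)⁻¹ * n⁻¹) • u) with hG_def
  have f_eq : (fun x : EuclideanSpace ℝ (Fin d) => InnerProductGeometry.angle (x + c) v)
      = (fun x : EuclideanSpace ℝ (Fin d) => Real.arccos (⟪x, v⟫ * ‖x‖⁻¹)) ∘ (fun x : EuclideanSpace ℝ (Fin d) => x + c) := by
    funext x
    simp [InnerProductGeometry.angle, hv, div_eq_mul_inv]
  have hGrad : HasGradientAt (fun x : EuclideanSpace ℝ (Fin d) => InnerProductGeometry.angle (x + c) v) G w := by
    rw [hasGradientAt_iff_hasFDerivAt, f_eq]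
    refine hF.congr_fderiv ?_
    ext y
    simp only [hG_def, InnerProductSpace.toDual_apply_apply, inner_sub_left, inner_smul_left,
      real_inner_smul_left, ContinuousLinearMap.comp_apply, ContinuousLinearMap.smul_apply,
      ContinuousLinearMap.add_apply, ContinuousLinearMap.coe_id', id_eq, innerSL_apply_apply,
      smul_eq_mul, nsmul_eq_mul, Nat.cast_ofNat, conj_trivial, starRingEnd_apply, star_trivial]
    ring
  refine ⟨by rw [f_eq]; exact hF.differentiableAt, ?_⟩
  rw [hGrad.gradient]
  have hvv : ⟪v, v⟫ = 1 := by
    rw [real_inner_self_eq_norm_sq, hv]; norm_num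
  have huu : ⟪u, u⟫ = n ^ 2 := by rw [real_inner_self_eq_norm_sq]
  have hGsq : ‖G‖ ^ 2 = (1 / n) ^ 2 := by
    have hvu : ⟪v, u⟫ = s := real_inner_comm u v
    rw [← real_inner_self_eq_norm_sq, hG_def]
    simp only [real_inner_smul_left, real_inner_smul_right, inner_sub_left, inner_sub_right]
    rw [huu, hvv, hvu, ← hs_def]
    have hsqs : Real.sqrt (1 - (s * n⁻¹) ^ 2) ^ 2 = 1 - (s * n⁻¹) ^ 2 :=
      Real.sq_sqrt hpos.le
    set S := Real.sqrt (1 - (s * n⁻¹) ^ 2) with hS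
    have hS2 : S ^ 2 = 1 - (s * n⁻¹) ^ 2 := Real.sq_sqrt hpos.le
    have hSne : S ≠ 0 := hsq.ne'
    have hns : n ^ 2 - s ^ 2 > 0 := by nlinarith [abs_lt.mp ht, hn2]
    have hS2' : S ^ 2 * n ^ 2 = n ^ 2 - s ^ 2 := by
      rw [hS2]; field_simp
    field_simp
    linear_combination (-1 : ℝ) * hS2'
  calc ‖G‖ = Real.sqrt (‖G‖ ^ 2) := (Real.sqrt_sq (norm_nonneg _)).symm
    _ = Real.sqrt ((1 / n) ^ 2) := by rw [hGsq]
    _ = 1 / n := Real.sqrt_sq (by positivity)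
end

section
/- Let d ≥ 2, let v ∈ ℝ^d be a unit vector, let c ∈ ℝ^d be a fixed vector, let α ∈ ℝ, and let w ∈ ℝ^d be such that w + c is nonzero and not a scalar multiple of v. Then the function g(x) = (θ⟨x + c, v⟩ − α)², where θ⟨x + c, v⟩ is the undirected angle between x + c and v, is differentiable at w and the norm of its gradient at w equals 2·|θ⟨w + c, v⟩ − α| / ‖w + c‖. In particular, this gradient norm tends to 0 as the angle θ⟨w + c, v⟩ converges to α. -/
open RealInnerProductSpace

/-- Gradient norm of the squared angular deviation: for a unit vector `v`, a fixed `c`,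
`α ∈ ℝ`, and `w` with `w + c` nonzero and not a scalar multiple of `v`, the map
`x ↦ (θ⟨x + c, v⟩ − α)²` is differentiable at `w` with gradient of norm
`2·|θ⟨w + c, v⟩ − α| / ‖w + c‖`; in particular this gradient norm tends to `0` as the
angle converges to `α`. -/
theorem gradient_norm_sq_angle_dev (d : ℕ) (hd : 2 ≤ d)
    (v c w : EuclideanSpace ℝ (Fin d)) (α : ℝ) (hv : ‖v‖ = 1) (hwc : w + c ≠ 0)
    (hwv : ¬ ∃ r : ℝ, w + c = r • v) :
    DifferentiableAt ℝ (fun x : EuclideanSpace ℝ (Fin d) =>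
        (InnerProductGeometry.angle (x + c) v - α) ^ 2) w ∧
    ‖gradient (fun x : EuclideanSpace ℝ (Fin d) =>
        (InnerProductGeometry.angle (x + c) v - α) ^ 2) w‖
      = 2 * |InnerProductGeometry.angle (w + c) v - α| / ‖w + c‖ ∧
    Filter.Tendsto (fun θ : ℝ => 2 * |θ - α| / ‖w + c‖) (nhds α) (nhds 0) := by
  have hnu : (0:ℝ) < ‖w + c‖ := norm_pos_iff.mpr hwc
  -- strict Cauchy–Schwarz
  have h1 : ⟪w + c, v⟫ < ‖w + c‖ := by
    have h := inner_lt_norm_mul_iff_real (x := w + c) (y := v)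
    rw [hv, mul_one, one_smul] at h
    exact h.mpr (fun hh => hwv ⟨‖w + c‖, hh⟩)
  have h2 : -⟪w + c, v⟫ < ‖w + c‖ := by
    have h := inner_lt_norm_mul_iff_real (x := w + c) (y := -v)
    rw [norm_neg, hv, mul_one, inner_neg_right, one_smul, smul_neg] at h
    have := h.mpr (fun hh => hwv ⟨-‖w + c‖, by rw [neg_smul]; exact hh⟩)
    linarith
  set t₀ : ℝ := ⟪w + c, v⟫ / ‖w + c‖ with ht₀def
  have ht1 : t₀ < 1 := (div_lt_one hnu).mpr h1
  have ht2 : -1 < t₀ := by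
    rw [neg_lt, ht₀def, ← neg_div]; exact (div_lt_one hnu).mpr h2
  have hone : (0:ℝ) < 1 - t₀ ^ 2 := by nlinarith
  have hsone : (0:ℝ) < Real.sqrt (1 - t₀ ^ 2) := Real.sqrt_pos.mpr hone
  -- derivative of x ↦ ⟪x + c, v⟫ * ‖x + c‖⁻¹
  have hadd : HasFDerivAt (fun x : EuclideanSpace ℝ (Fin d) => x + c)
      (ContinuousLinearMap.id ℝ (EuclideanSpace ℝ (Fin d))) w := (hasFDerivAt_id w).add_const c
  have hinner := hadd.inner ℝ (hasFDerivAt_const v w)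
  have hsq := hadd.inner ℝ hadd
  have hself : ⟪w + c, w + c⟫ = ‖w + c‖ * ‖w + c‖ := real_inner_self_eq_norm_mul_norm (w + c)
  have hsqrt := Real.hasDerivAt_sqrt (x := ⟪w + c, w + c⟫) (by rw [hself]; positivity)
  have h3 := hsqrt.comp_hasFDerivAt w hsq
  rw [show (Real.sqrt ∘ fun x : EuclideanSpace ℝ (Fin d) => ⟪x + c, x + c⟫)
      = fun x : EuclideanSpace ℝ (Fin d) => ‖x + c‖ from funext fun x => by
    simp only [Function.comp_apply, real_inner_self_eq_norm_mul_norm,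
      Real.sqrt_mul_self (norm_nonneg _)]] at h3
  have hinv := (hasDerivAt_inv hnu.ne').comp_hasFDerivAt w h3
  have hmul := hinner.mul hinv
  set p : EuclideanSpace ℝ (Fin d) :=
    (‖w + c‖⁻¹) • v - (⟪w + c, v⟫ / ‖w + c‖ ^ 3) • (w + c) with hpdef
  have hT : HasFDerivAt (fun x : EuclideanSpace ℝ (Fin d) => ⟪x + c, v⟫ * ‖x + c‖⁻¹)
      ((innerSL ℝ) p) w := by
    refine hmul.congr_fderiv (Eq.symm ?_)
    apply ContinuousLinearMap.ext; intro h
    simp only [hpdef, innerSL_apply_apply, inner_sub_left, real_inner_smul_left,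
      ContinuousLinearMap.add_apply, ContinuousLinearMap.smul_apply,
      ContinuousLinearMap.coe_comp', Function.comp_apply, ContinuousLinearMap.prod_apply,
      ContinuousLinearMap.coe_id', id_eq, ContinuousLinearMap.zero_apply,
      fderivInnerCLM_apply, inner_zero_right, smul_eq_mul, add_zero, zero_add]
    rw [hself, Real.sqrt_mul_self (norm_nonneg _), real_inner_comm h v, real_inner_comm h (w + c)]
    field_simp
    ring
  -- compose with arccos
  have harc := (Real.hasDerivAt_arccos ht2.ne' ht1.ne).comp_hasFDerivAt_of_eq w hT
    (by rw [ht₀def, div_eq_mul_inv])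
  -- compose with (· - α)^2
  have hsq2 : HasDerivAt (fun y : ℝ => (y - α) ^ 2) (2 * (Real.arccos t₀ - α))
      (Real.arccos t₀) := by
    have := ((hasDerivAt_id (Real.arccos t₀)).sub_const α).pow 2
    simpa [mul_comm, Pi.pow_def] using this
  have hg := hsq2.comp_hasFDerivAt_of_eq w harc
    (by simp only [Function.comp_apply]; rw [ht₀def, div_eq_mul_inv])
  -- identify the function with the angle expression
  have hfun : ((fun y : ℝ => (y - α) ^ 2) ∘ (Real.arccos ∘
      fun x : EuclideanSpace ℝ (Fin d) => ⟪x + c, v⟫ * ‖x + c‖⁻¹))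
      = fun x : EuclideanSpace ℝ (Fin d) => (InnerProductGeometry.angle (x + c) v - α) ^ 2 := by
    funext x
    simp only [Function.comp_apply, InnerProductGeometry.angle, hv, mul_one, div_eq_mul_inv]
  rw [hfun] at hg
  set s : ℝ := 2 * (Real.arccos t₀ - α) * (-(1 / Real.sqrt (1 - t₀ ^ 2))) with hsdef
  have hgrad : HasGradientAt
      (fun x : EuclideanSpace ℝ (Fin d) => (InnerProductGeometry.angle (x + c) v - α) ^ 2)
      (s • p) w := by
    rw [hasGradientAt_iff_hasFDerivAt]
    refine hg.congr_fderiv (Eq.symm ?_)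
    apply ContinuousLinearMap.ext; intro h
    simp only [InnerProductSpace.toDual_apply_apply, real_inner_smul_left,
      ContinuousLinearMap.smul_apply, innerSL_apply_apply, smul_eq_mul, hsdef]
    ring
  have hangle : InnerProductGeometry.angle (w + c) v = Real.arccos t₀ := by
    rw [InnerProductGeometry.angle, hv, mul_one]
  -- norm of p
  have hp2 : ‖p‖ ^ 2 = (1 - t₀ ^ 2) / ‖w + c‖ ^ 2 := by
    rw [← real_inner_self_eq_norm_sq]
    simp only [hpdef, inner_sub_left, inner_sub_right, real_inner_smul_left,
      real_inner_smul_right, real_inner_comm (w + c) v]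
    rw [real_inner_self_eq_norm_sq v, hv]
    rw [show ⟪w + c, w + c⟫ = ‖w + c‖ ^ 2 from real_inner_self_eq_norm_sq (w + c)]
    rw [ht₀def]
    generalize ⟪w + c, v⟫ = b
    have hb := hnu.ne'
    field_simp
    ring
  have hpn : ‖p‖ = Real.sqrt (1 - t₀ ^ 2) / ‖w + c‖ := by
    rw [← Real.sqrt_sq (norm_nonneg p), hp2, Real.sqrt_div hone.le,
      Real.sqrt_sq hnu.le]
  refine ⟨hg.differentiableAt, ?_, ?_⟩
  · rw [hgrad.gradient, norm_smul, Real.norm_eq_abs, hpn, hangle, hsdef]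
    rw [abs_mul, abs_neg, abs_of_pos (by positivity : (0:ℝ) < 1 / Real.sqrt (1 - t₀ ^ 2)),
      abs_mul, abs_of_nonneg (by norm_num : (0:ℝ) ≤ 2)]
    field_simp
  · have hc2 : Continuous fun θ : ℝ => 2 * |θ - α| / ‖w + c‖ :=
      ((continuous_const.mul ((continuous_id.sub continuous_const).abs)).div_const _)
    simpa using hc2.tendsto α
end
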